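/- arXiv:2307.03044 — 3 statements merged into one kernel-verified Lean document; each statement's English description precedes it below -/
import Mathlib

section
/- If M is an irreducible nonnegative real square matrix, then M has a real eigenvalue λ > 0 (the Perron–Frobenius eigenvalue) such that λ ≥ |μ| for every eigenvalue μ of M, and λ has algebraic multiplicity one. -/
/-- A nonnegative real square matrix is irreducible if its adjacency graph is strongly
connected; equivalently, for all `i j` some power of `M` has a positive `(i,j)` entry. -/
def Matrix.IsIrreducible' {m : ℕ} (M : Matrix (Fin m) (Fin m) ℝ) : Prop :=
  ∀ i j : Fin m, ∃ n : ℕ, 0 < (M ^ (n + 1)) i j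

/-- The characteristic polynomial of a real matrix, viewed over `ℂ`; its roots are the
complex eigenvalues of `M`, and `rootMultiplicity` gives the algebraic multiplicity. -/
noncomputable def Matrix.complexCharpoly {m : ℕ} (M : Matrix (Fin m) (Fin m) ℝ) :
    Polynomial ℂ :=
  (M.map (algebraMap ℝ ℂ)).charpoly

/-!
Let `ρ` be the largest modulus of a complex eigenvalue `μ` of `A`, with eigenvector `x`. By the
triangle inequality `z = |x|` satisfies `ρ • z ≤ A *ᵥ z`. If the inequality were strict somewhere,
then for the positive matrix `P = ∑_{k<N} A ^ k` the positive vector `P *ᵥ z` would satisfy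
`(ρ + ε) • P *ᵥ z ≤ A *ᵥ (P *ᵥ z)`, so `‖A ^ k‖` would grow like `(ρ + ε) ^ k`, contradicting
Gelfand's formula. Hence `z` is a nonnegative, and by irreducibility positive, eigenvector for `ρ`;
applied to `Aᵀ` this also gives a positive left eigenvector `v`. Every real eigenvector for `ρ` is
a multiple of `z` (subtract the largest multiple of `z` that keeps it nonnegative), and pairing with
`v` shows `ker (A - ρ)² = ker (A - ρ)`. So the generalized eigenspace of `ρ` is the line through
`z`, i.e. `ρ` is a simple root of the characteristic polynomial.
-/

open Filter Topology Polynomial Matrix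

lemma exists_pos_smul_le_of_forall_pos {ι : Type*} [Finite ι] (u : ι → ℝ) {y : ι → ℝ}
    (hy : ∀ i, 0 < y i) : ∃ ε : ℝ, 0 < ε ∧ ε • u ≤ y := by
  have hsmall (i : ι) : ∀ᶠ ε in 𝓝[>] (0 : ℝ), ε * u i < y i := nhdsWithin_le_nhds <|
    ((continuous_mul_const (u i)).tendsto' 0 0 (zero_mul _)).eventually (gt_mem_nhds (hy i))
  obtain ⟨ε, hε, hεu⟩ := (eventually_mem_nhdsWithin.and (eventually_all.mpr hsmall)).exists
  exact ⟨ε, hε, fun i => (hεu i).le⟩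

namespace Matrix

variable {n : Type*} [Fintype n] {A : Matrix n n ℝ} {r : ℝ} {u v z : n → ℝ}

lemma mulVec_mono (hA : ∀ i j, 0 ≤ A i j) {x y : n → ℝ} (h : x ≤ y) : A *ᵥ x ≤ A *ᵥ y :=
  fun i => Finset.sum_le_sum fun j _ => mul_le_mul_of_nonneg_left (h j) (hA i j)

lemma norm_map_ofReal_mulVec_le (hA : ∀ i j, 0 ≤ A i j) (x : n → ℂ) (i : n) :
    ‖(A.map (algebraMap ℝ ℂ) *ᵥ x) i‖ ≤ (A *ᵥ fun j => ‖x j‖) i :=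
  (norm_sum_le _ _).trans_eq <| Finset.sum_congr rfl fun j _ => by
    simp [abs_of_nonneg (hA i j)]

lemma mulVec_apply_pos {B : Matrix n n ℝ} {i j : n} (hB : ∀ l, 0 ≤ B i l) (hz : 0 ≤ z)
    (hBij : 0 < B i j) (hzj : 0 < z j) : 0 < (B *ᵥ z) i :=
  Finset.sum_pos' (fun l _ => mul_nonneg (hB l) (hz l)) ⟨j, Finset.mem_univ j, mul_pos hBij hzj⟩

lemma mulVec_pos_of_forall_pos {P : Matrix n n ℝ} (hP : ∀ i j, 0 < P i j) (hz : 0 ≤ z)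
    (hz0 : z ≠ 0) (i : n) : 0 < (P *ᵥ z) i := by
  obtain ⟨j, hj⟩ := Function.ne_iff.mp hz0
  exact mulVec_apply_pos (fun l => (hP i l).le) hz (hP i j) ((hz j).lt_of_ne' hj)

variable [DecidableEq n]

lemma pow_mulVec_eq_pow_smul (hAz : A *ᵥ z = r • z) (k : ℕ) : A ^ k *ᵥ z = r ^ k • z := by
  induction k with
  | zero => simp
  | succ k ih => rw [pow_succ', ← mulVec_mulVec, ih, mulVec_smul, hAz, smul_smul, pow_succ]

lemma pow_smul_le_pow_mulVec (hA : ∀ i j, 0 ≤ A i j) {c : ℝ} (hc : 0 ≤ c)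
    (hcu : c • u ≤ A *ᵥ u) (k : ℕ) : c ^ k • u ≤ A ^ k *ᵥ u := by
  induction k with
  | zero => simp
  | succ k ih =>
    calc c ^ (k + 1) • u = A *ᵥ (c ^ k • u) + c ^ k • (c • u - A *ᵥ u) := by
          rw [mulVec_smul, pow_succ, mul_smul, smul_sub]; abel
      _ ≤ A *ᵥ (c ^ k • u) := add_le_of_nonpos_right <|
          smul_nonpos_of_nonneg_of_nonpos (pow_nonneg hc k) (sub_nonpos.mpr hcu)
      _ ≤ A ^ (k + 1) *ᵥ u := by rw [pow_succ', ← mulVec_mulVec]; exact mulVec_mono hA ih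

section Gelfand

-- `spectralRadius` is purely algebraic; the ℓ∞ operator norm only serves Gelfand's formula.
attribute [local instance] Matrix.linftyOpNormedRing Matrix.linftyOpNormedAlgebra

lemma ofReal_le_spectralRadius_of_smul_le_mulVec [Nonempty n] (hA : ∀ i j, 0 ≤ A i j)
    (hu : ∀ i, 0 < u i) {c : ℝ} (hcu : c • u ≤ A *ᵥ u) :
    ENNReal.ofReal c ≤ spectralRadius ℂ (A.map (algebraMap ℝ ℂ)) := by
  rcases le_or_gt c 0 with hc | hc
  · simp [ENNReal.ofReal_of_nonpos hc]
  have : CompleteSpace (Matrix n n ℂ) := FiniteDimensional.complete ℂ _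
  obtain ⟨i⟩ := ‹Nonempty n›
  have hu_norm : 0 < ‖u‖ := (hu i).trans_le ((Real.le_norm_self _).trans (norm_le_pi_norm u i))
  set a := u i / ‖u‖
  have ha : 0 < a := div_pos (hu i) hu_norm
  have hgrowth (k : ℕ) : c ^ k * a ≤ ‖A.map (algebraMap ℝ ℂ) ^ k‖ := by
    set uC : n → ℂ := fun j => (u j : ℂ)
    have huC : ‖uC‖ ≤ ‖u‖ := (pi_norm_le_iff_of_nonneg (norm_nonneg u)).mpr fun j => by
      simpa [uC, Complex.norm_real] using norm_le_pi_norm u j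
    have hrow : (algebraMap ℝ ℂ) ((A ^ k *ᵥ u) i) = (A.map (algebraMap ℝ ℂ) ^ k *ᵥ uC) i := by
      rw [RingHom.map_mulVec, ← RingHom.mapMatrix_apply, map_pow]; rfl
    have hpos : 0 ≤ (A ^ k *ᵥ u) i :=
      (mul_nonneg (pow_nonneg hc.le k) (hu i).le).trans (pow_smul_le_pow_mulVec hA hc.le hcu k i)
    rw [mul_div_assoc', div_le_iff₀ hu_norm]
    calc c ^ k * u i ≤ (A ^ k *ᵥ u) i := pow_smul_le_pow_mulVec hA hc.le hcu k i
      _ = ‖(A.map (algebraMap ℝ ℂ) ^ k *ᵥ uC) i‖ := by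
          rw [← hrow, Complex.coe_algebraMap, Complex.norm_of_nonneg hpos]
      _ ≤ ‖A.map (algebraMap ℝ ℂ) ^ k *ᵥ uC‖ := norm_le_pi_norm _ i
      _ ≤ ‖A.map (algebraMap ℝ ℂ) ^ k‖ * ‖uC‖ := linfty_opNorm_mulVec _ _
      _ ≤ _ := mul_le_mul_of_nonneg_left huC (norm_nonneg _)
  have hlower : Tendsto (fun k : ℕ => ENNReal.ofReal (c * a ^ (1 / k : ℝ))) atTop
      (𝓝 (ENNReal.ofReal c)) := by
    have hroot : Tendsto (fun k : ℕ => a ^ (1 / k : ℝ)) atTop (𝓝 1) := by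
      simpa [Function.comp_def] using ((Real.continuousAt_const_rpow ha.ne').tendsto.comp
        tendsto_one_div_atTop_nhds_zero_nat :)
    simpa using ENNReal.tendsto_ofReal (hroot.const_mul c)
  refine le_of_tendsto_of_tendsto hlower
    (spectrum.pow_norm_pow_one_div_tendsto_nhds_spectralRadius _) ?_
  filter_upwards [eventually_ne_atTop 0] with k hk
  refine ENNReal.ofReal_le_ofReal ?_
  calc c * a ^ (1 / k : ℝ) = (c ^ k * a) ^ (1 / k : ℝ) := by
        rw [Real.mul_rpow (by positivity) ha.le, one_div, Real.pow_rpow_inv_natCast hc.le hk]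
    _ ≤ _ := Real.rpow_le_rpow (by positivity) (hgrowth k) (by positivity)

end Gelfand

lemma spectralRadius_le_ofReal_of_forall_isRoot {B : Matrix n n ℂ} {ρ : ℝ}
    (hB : ∀ μ, B.charpoly.IsRoot μ → ‖μ‖ ≤ ρ) : spectralRadius ℂ B ≤ ENNReal.ofReal ρ :=
  iSup₂_le fun μ hμ => by
    rw [← enorm_eq_nnnorm, ← ofReal_norm]
    exact ENNReal.ofReal_le_ofReal (hB μ (mem_spectrum_iff_isRoot_charpoly.mp hμ))

lemma exists_isRoot_charpoly_forall_norm_le [Nonempty n] (B : Matrix n n ℂ) :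
    ∃ μ, B.charpoly.IsRoot μ ∧ ∀ ν, B.charpoly.IsRoot ν → ‖ν‖ ≤ ‖μ‖ := by
  have hdeg : B.charpoly.degree ≠ 0 := by
    rw [charpoly_degree_eq_dim]; exact_mod_cast Fintype.card_ne_zero
  obtain ⟨μ₀, hμ₀⟩ := IsAlgClosed.exists_root _ hdeg
  have hne : B.charpoly.roots.toFinset.Nonempty := ⟨μ₀, by simpa [B.charpoly_monic.ne_zero]⟩
  obtain ⟨μ, hμ, hmax⟩ := B.charpoly.roots.toFinset.exists_max_image norm hne
  simp only [Multiset.mem_toFinset, mem_roots B.charpoly_monic.ne_zero] at hμ hmax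
  exact ⟨μ, hμ, hmax⟩

lemma rootMultiplicity_charpoly_map_ofReal (A : Matrix n n ℝ) (r : ℝ) :
    (A.map (algebraMap ℝ ℂ)).charpoly.rootMultiplicity (r : ℂ) =
      Module.finrank ℝ (Module.End.maxGenEigenspace (toLin' A) r) := by
  rw [charpoly_map, ← Complex.coe_algebraMap,
    ← eq_rootMultiplicity_map (algebraMap ℝ ℂ).injective, ← charpoly_toLin',
    LinearMap.finrank_maxGenEigenspace_eq]

namespace IsIrreducible

lemma exists_sum_pow_pos (hA : A.IsIrreducible) :
    ∃ N, ∀ i j, 0 < (∑ k ∈ Finset.range N, A ^ k) i j := by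
  choose f _ hf using (isIrreducible_iff_exists_pow_pos hA.nonneg).mp hA
  refine ⟨Finset.univ.sup (fun p : n × n => f p.1 p.2) + 1, fun i j => ?_⟩
  have hmem : f i j ∈ Finset.range (Finset.univ.sup (fun p : n × n => f p.1 p.2) + 1) :=
    Finset.mem_range.mpr <| Nat.lt_succ_of_le <|
      Finset.le_sup (f := fun p : n × n => f p.1 p.2) (Finset.mem_univ (i, j))
  rw [sum_apply]
  exact (hf i j).trans_le <| Finset.single_le_sum
    (fun k _ => pow_apply_nonneg hA.nonneg k i j) hmem

lemma exists_pow_mul_pos (hA : A.IsIrreducible) (hz : 0 ≤ z) (hz0 : z ≠ 0)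
    (hAz : A *ᵥ z = r • z) (i : n) : ∃ k > 0, 0 < r ^ k * z i := by
  obtain ⟨j, hj⟩ := Function.ne_iff.mp hz0
  obtain ⟨k, hk, hkij⟩ := (isIrreducible_iff_exists_pow_pos hA.nonneg).mp hA i j
  refine ⟨k, hk, ?_⟩
  have hzj : 0 < z j := (hz j).lt_of_ne' hj
  simpa [pow_mulVec_eq_pow_smul hAz] using
    mulVec_apply_pos (pow_apply_nonneg hA.nonneg k i) hz hkij hzj

lemma pos_of_mulVec_eq_smul (hA : A.IsIrreducible) (hz : 0 ≤ z) (hz0 : z ≠ 0)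
    (hAz : A *ᵥ z = r • z) (i : n) : 0 < z i := by
  obtain ⟨k, -, hk⟩ := hA.exists_pow_mul_pos hz hz0 hAz i
  exact (hz i).lt_of_ne' (right_ne_zero_of_mul hk.ne')

lemma eigenvalue_pos (hA : A.IsIrreducible) (hz : 0 ≤ z) (hz0 : z ≠ 0)
    (hAz : A *ᵥ z = r • z) : 0 < r := by
  obtain ⟨j, hj⟩ := Function.ne_iff.mp hz0
  have hzj : 0 < z j := (hz j).lt_of_ne' hj
  have hr : 0 ≤ r := by
    have : 0 ≤ (A *ᵥ z) j := Finset.sum_nonneg fun l _ => mul_nonneg (hA.nonneg j l) (hz l)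
    rw [hAz, Pi.smul_apply, smul_eq_mul] at this
    exact nonneg_of_mul_nonneg_left this hzj
  obtain ⟨k, hk0, hk⟩ := hA.exists_pow_mul_pos hz hz0 hAz j
  exact hr.lt_of_ne' (ne_zero_pow hk0.ne' (left_ne_zero_of_mul hk.ne'))

lemma mulVec_eq_smul_of_smul_le_mulVec (hA : A.IsIrreducible) (hr : 0 ≤ r)
    (hρ : spectralRadius ℂ (A.map (algebraMap ℝ ℂ)) ≤ ENNReal.ofReal r) (hz : 0 ≤ z)
    (hz0 : z ≠ 0) (hsub : r • z ≤ A *ᵥ z) : A *ᵥ z = r • z := by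
  by_contra hne
  obtain ⟨j, -⟩ := Function.ne_iff.mp hz0
  have : Nonempty n := ⟨j⟩
  set w := A *ᵥ z - r • z
  have hw : 0 ≤ w := sub_nonneg.mpr hsub
  have hw0 : w ≠ 0 := sub_ne_zero.mpr hne
  obtain ⟨N, hP⟩ := hA.exists_sum_pow_pos
  set P := ∑ k ∈ Finset.range N, A ^ k
  have hPA : P * A = A * P := (Commute.sum_left _ _ _ fun k _ => Commute.pow_left rfl k).eq
  have hAPz : A *ᵥ (P *ᵥ z) = r • (P *ᵥ z) + P *ᵥ w := by
    rw [mulVec_mulVec, ← hPA, ← mulVec_mulVec, mulVec_sub, mulVec_smul, add_sub_cancel]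
  obtain ⟨ε, hε, hεPw⟩ := exists_pos_smul_le_of_forall_pos (P *ᵥ z)
    (mulVec_pos_of_forall_pos hP hw hw0)
  have hgrowth : (r + ε) • (P *ᵥ z) ≤ A *ᵥ (P *ᵥ z) := by
    rw [hAPz, add_smul]
    exact add_le_add_right hεPw _
  have := (ofReal_le_spectralRadius_of_smul_le_mulVec hA.nonneg
    (mulVec_pos_of_forall_pos hP hz hz0) hgrowth).trans hρ
  rw [ENNReal.ofReal_le_ofReal_iff hr] at this
  linarith

lemma exists_pos_eigenvector (hA : A.IsIrreducible) {μ : ℂ}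
    (hμ : (A.map (algebraMap ℝ ℂ)).charpoly.IsRoot μ)
    (hmax : ∀ ν, (A.map (algebraMap ℝ ℂ)).charpoly.IsRoot ν → ‖ν‖ ≤ ‖μ‖) :
    ∃ u : n → ℝ, (∀ i, 0 < u i) ∧ A *ᵥ u = ‖μ‖ • u := by
  rw [← charpoly_toLin', ← Module.End.hasEigenvalue_iff_isRoot_charpoly] at hμ
  obtain ⟨x, hx, hx0⟩ := hμ.exists_hasEigenvector
  rw [Module.End.mem_eigenspace_iff, toLin'_apply] at hx
  set z : n → ℝ := fun j => ‖x j‖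
  have hz : 0 ≤ z := fun j => norm_nonneg _
  have hz0 : z ≠ 0 := fun h => hx0 <| funext fun j => norm_eq_zero.mp (congrFun h j)
  have hsub : ‖μ‖ • z ≤ A *ᵥ z := fun i => by
    have := norm_map_ofReal_mulVec_le hA.nonneg x i
    rwa [hx, Pi.smul_apply, smul_eq_mul, norm_mul] at this
  have hAz := hA.mulVec_eq_smul_of_smul_le_mulVec (norm_nonneg μ)
    (spectralRadius_le_ofReal_of_forall_isRoot hmax) hz hz0 hsub
  exact ⟨z, hA.pos_of_mulVec_eq_smul hz hz0 hAz, hAz⟩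

lemma eq_smul_of_mulVec_eq_smul [Nonempty n] (hA : A.IsIrreducible) (hu : ∀ i, 0 < u i)
    (hAu : A *ᵥ u = r • u) (hAv : A *ᵥ v = r • v) : ∃ c : ℝ, v = c • u := by
  obtain ⟨i₀, -, hi₀⟩ := Finset.univ.exists_min_image (fun i => v i / u i) Finset.univ_nonempty
  refine ⟨v i₀ / u i₀, ?_⟩
  set w := v - (v i₀ / u i₀) • u
  have hw : 0 ≤ w := fun i => by
    simpa [w, sub_nonneg] using (le_div_iff₀ (hu i)).mp (hi₀ i (Finset.mem_univ i))
  have hwi₀ : w i₀ = 0 := by simp [w, div_mul_cancel₀ _ (hu i₀).ne']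
  have hAw : A *ᵥ w = r • w := by
    rw [mulVec_sub, mulVec_smul, hAv, hAu, smul_sub, smul_comm r]
  by_contra hne
  exact (hA.pos_of_mulVec_eq_smul hw (sub_ne_zero.mpr hne) hAw i₀).ne' hwi₀

lemma maxGenEigenspace_toLin'_eq_span [Nonempty n] (hA : A.IsIrreducible) (hu : ∀ i, 0 < u i)
    (hAu : A *ᵥ u = r • u) (hv : ∀ i, 0 < v i) (hvA : v ᵥ* A = r • v) :
    Module.End.maxGenEigenspace (toLin' A) r = ℝ ∙ u := by
  have hsub (x : n → ℝ) : (toLin' A - r • 1) x = A *ᵥ x - r • x := by simp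
  have hvu : 0 < v ⬝ᵥ u := Finset.sum_pos (fun i _ => mul_pos (hv i) (hu i)) Finset.univ_nonempty
  refine le_antisymm (fun x hx => ?_) ((Submodule.span_singleton_le_iff_mem _ _).mpr ?_)
  · obtain ⟨k, hk⟩ := (Module.End.mem_maxGenEigenspace _ _ _).mp hx
    clear hx
    induction k generalizing x with
    | zero => simp_all
    | succ k ih =>
      rw [pow_succ, Module.End.mul_apply] at hk
      obtain ⟨c, hc⟩ := Submodule.mem_span_singleton.mp (ih _ hk)
      have hvc : c * (v ⬝ᵥ u) = 0 := by
        rw [← smul_eq_mul, ← dotProduct_smul, hc, hsub, dotProduct_sub, dotProduct_mulVec, hvA,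
          dotProduct_smul, smul_dotProduct, sub_self]
      have hAx : A *ᵥ x = r • x := by
        rw [← sub_eq_zero, ← hsub, ← hc, (mul_eq_zero.mp hvc).resolve_right hvu.ne', zero_smul]
      obtain ⟨c', hc'⟩ := hA.eq_smul_of_mulVec_eq_smul hu hAu hAx
      exact Submodule.mem_span_singleton.mpr ⟨c', hc'.symm⟩
  · exact (Module.End.mem_maxGenEigenspace _ _ _).mpr ⟨1, by simp [hAu]⟩

end IsIrreducible

end Matrix

/-- Perron–Frobenius theorem, part I(a): an irreducible nonnegative real square matrix has
a positive real eigenvalue `lam` dominating all complex eigenvalues in absolute value, of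
algebraic multiplicity one. -/
theorem perron_frobenius_exists {m : ℕ} (hm : 0 < m) (M : Matrix (Fin m) (Fin m) ℝ)
    (hnn : ∀ i j, 0 ≤ M i j) (hirr : M.IsIrreducible') :
    ∃ lam : ℝ, 0 < lam ∧ M.complexCharpoly.IsRoot (lam : ℂ) ∧
      (∀ μ : ℂ, M.complexCharpoly.IsRoot μ → ‖μ‖ ≤ lam) ∧
      M.complexCharpoly.rootMultiplicity (lam : ℂ) = 1 := by
  have : Nonempty (Fin m) := ⟨⟨0, hm⟩⟩
  have hA : M.IsIrreducible := (isIrreducible_iff_exists_pow_pos hnn).mpr fun i j =>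
    let ⟨k, hk⟩ := hirr i j; ⟨k + 1, k.succ_pos, hk⟩
  obtain ⟨μ, hμ, hmax⟩ := exists_isRoot_charpoly_forall_norm_le (M.map (algebraMap ℝ ℂ))
  have hcharpolyT : (Mᵀ.map (algebraMap ℝ ℂ)).charpoly = (M.map (algebraMap ℝ ℂ)).charpoly := by
    rw [transpose_map, charpoly_transpose]
  obtain ⟨u, hu, hMu⟩ := hA.exists_pos_eigenvector hμ hmax
  obtain ⟨v, hv, hMv⟩ := hA.transpose.exists_pos_eigenvector (hcharpolyT ▸ hμ) (hcharpolyT ▸ hmax)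
  have hu0 : u ≠ 0 := fun h => (hu ⟨0, hm⟩).ne' (congrFun h _)
  have hmult : M.complexCharpoly.rootMultiplicity (‖μ‖ : ℂ) = 1 := by
    rw [complexCharpoly, rootMultiplicity_charpoly_map_ofReal,
      hA.maxGenEigenspace_toLin'_eq_span hu hMu hv (by rwa [← mulVec_transpose]),
      finrank_span_singleton hu0]
  refine ⟨‖μ‖, hA.eigenvalue_pos (fun i => (hu i).le) hu0 hMu, ?_, hmax, hmult⟩
  exact (rootMultiplicity_pos (charpoly_monic _).ne_zero).mp (hmult ▸ one_pos)
end

section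
/- If M is an irreducible nonnegative real square matrix with Perron–Frobenius eigenvalue λ, then there exist a right eigenvector v and a left eigenvector w of M for λ, both with all entries nonnegative, with wᵀv = 1. -/
/-!
A complex eigenvector `z` for `lam` gives `lam • |z| ≤ M *ᵥ |z|` entrywise. If this inequality were
strict somewhere, irreducibility would upgrade it to `(lam + ε) • u ≤ M *ᵥ u` for some nonnegative
`u ≠ 0`, whence `(lam + ε) ^ n ≤ ‖M ^ n‖` for all `n`, and Gelfand's formula would give a complex
eigenvalue of modulus `> lam`. So `|z|` is a nonnegative eigenvector; the same argument for `Mᵀ`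
gives `w`, and irreducibility makes the right eigenvector strictly positive, so `wᵀv > 0` can be
normalised to `1`.
-/

open Matrix Filter Topology

-- The `∞`-operator norm makes square complex matrices a Banach algebra, so Gelfand's formula
-- applies to them.
attribute [local instance] Matrix.linftyOpNormedAddCommGroup Matrix.linftyOpNormedRing
  Matrix.linftyOpNormedAlgebra

theorem spectrum.ofReal_le_spectralRadius_of_pow_le_norm_pow {A : Type*} [NormedRing A]
    [NormedAlgebra ℂ A] [CompleteSpace A] (a : A) {r : ℝ} (hr : 0 ≤ r)
    (h : ∀ n : ℕ, r ^ n ≤ ‖a ^ n‖) : ENNReal.ofReal r ≤ spectralRadius ℂ a := by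
  refine ge_of_tendsto (pow_norm_pow_one_div_tendsto_nhds_spectralRadius a) ?_
  filter_upwards [eventually_ne_atTop 0] with n hn
  refine ENNReal.ofReal_le_ofReal ?_
  calc r = (r ^ n) ^ (1 / n : ℝ) := by rw [one_div, Real.pow_rpow_inv_natCast hr hn]
    _ ≤ ‖a ^ n‖ ^ (1 / n : ℝ) := by gcongr; exact h n

theorem pi_norm_le_pi_norm_of_nonneg_of_le {ι : Type*} [Fintype ι] {v w : ι → ℝ}
    (hv : 0 ≤ v) (h : v ≤ w) : ‖v‖ ≤ ‖w‖ :=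
  (pi_norm_le_iff_of_nonneg (norm_nonneg w)).2 fun i => by
    rw [Real.norm_of_nonneg (hv i)]
    exact (h i).trans ((le_abs_self _).trans (norm_le_pi_norm w i))

theorem exists_pos_smul_le {ι : Type*} [Finite ι] (u : ι → ℝ) {y : ι → ℝ}
    (hy : ∀ i, 0 < y i) : ∃ ε > (0 : ℝ), ε • u ≤ y := by
  have hsmall : ∀ᶠ ε in 𝓝 (0 : ℝ), ∀ i, ε * u i < y i := eventually_all.2 fun i => by
    have : Tendsto (fun ε : ℝ => ε * u i) (𝓝 0) (𝓝 0) := by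
      simpa using (tendsto_id (x := 𝓝 (0 : ℝ))).mul_const (u i)
    exact this.eventually_lt_const (hy i)
  obtain ⟨ε, hε, hεpos⟩ :=
    ((hsmall.filter_mono nhdsWithin_le_nhds).and self_mem_nhdsWithin).exists (f := 𝓝[>] (0 : ℝ))
  exact ⟨ε, hεpos, fun i => (hε i).le⟩

theorem Pi.exists_pos_of_nonneg_of_ne_zero {ι α : Type*} [PartialOrder α] [Zero α]
    {v : ι → α} (h0 : 0 ≤ v) (h : v ≠ 0) : ∃ i, 0 < v i :=
  (Pi.lt_def.1 (h0.lt_of_ne h.symm)).2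

namespace Matrix

theorem complexCharpoly_transpose {m : ℕ} (M : Matrix (Fin m) (Fin m) ℝ) :
    Mᵀ.complexCharpoly = M.complexCharpoly := by
  rw [complexCharpoly, complexCharpoly, transpose_map, charpoly_transpose]

variable {ι : Type*} [Fintype ι] {M : Matrix ι ι ℝ}

theorem exists_mulVec_eq_smul_of_isRoot_charpoly {K : Type*} [DecidableEq ι] [Field K]
    {A : Matrix ι ι K} {μ : K} (h : A.charpoly.IsRoot μ) : ∃ z ≠ 0, A *ᵥ z = μ • z := by
  rw [← mem_spectrum_iff_isRoot_charpoly, ← spectrum_toLin',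
    ← Module.End.hasEigenvalue_iff_mem_spectrum] at h
  obtain ⟨z, hz⟩ := h.exists_hasEigenvector
  exact ⟨z, hz.2, hz.apply_eq_smul⟩

theorem spectralRadius_le_of_forall_isRoot_charpoly [DecidableEq ι] {A : Matrix ι ι ℂ} {r : ℝ}
    (h : ∀ μ, A.charpoly.IsRoot μ → ‖μ‖ ≤ r) : spectralRadius ℂ A ≤ ENNReal.ofReal r :=
  iSup₂_le fun μ hμ => by
    rw [← enorm_eq_nnnorm, ← ofReal_norm]
    exact ENNReal.ofReal_le_ofReal (h μ (mem_spectrum_iff_isRoot_charpoly.1 hμ))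

theorem linfty_opNorm_map_ofReal (N : Matrix ι ι ℝ) : ‖N.map (algebraMap ℝ ℂ)‖ = ‖N‖ := by
  simp [linfty_opNorm_def]

theorem mulVec_nonneg (hM : ∀ i j, 0 ≤ M i j) {v : ι → ℝ} (hv : 0 ≤ v) : 0 ≤ M *ᵥ v :=
  fun i => Finset.sum_nonneg fun j _ => mul_nonneg (hM i j) (hv j)

theorem mulVec_mono_s3 (hM : ∀ i j, 0 ≤ M i j) {v w : ι → ℝ} (h : v ≤ w) : M *ᵥ v ≤ M *ᵥ w := by
  simpa only [mulVec_sub, sub_nonneg] using mulVec_nonneg hM (sub_nonneg.2 h)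

theorem mulVec_apply_pos_s3 (hM : ∀ i j, 0 ≤ M i j) {v : ι → ℝ} (hv : 0 ≤ v) {i j : ι}
    (hij : 0 < M i j) (hj : 0 < v j) : 0 < (M *ᵥ v) i :=
  (mul_pos hij hj).trans_le <| Finset.single_le_sum (f := fun l => M i l * v l)
    (fun l _ => mul_nonneg (hM i l) (hv l)) (Finset.mem_univ j)

theorem pow_smul_le_pow_mulVec_s3 [DecidableEq ι] (hM : ∀ i j, 0 ≤ M i j) {r : ℝ} (hr : 0 ≤ r)
    {u : ι → ℝ} (h : r • u ≤ M *ᵥ u) (n : ℕ) : r ^ n • u ≤ M ^ n *ᵥ u := by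
  induction n with
  | zero => simp
  | succ n ih =>
    calc r ^ (n + 1) • u = r ^ n • (r • u) := by rw [pow_succ, mul_smul]
      _ ≤ r ^ n • (M *ᵥ u) := smul_le_smul_of_nonneg_left h (pow_nonneg hr n)
      _ = M *ᵥ (r ^ n • u) := (mulVec_smul M _ u).symm
      _ ≤ M *ᵥ (M ^ n *ᵥ u) := mulVec_mono_s3 hM ih
      _ = M ^ (n + 1) *ᵥ u := by rw [mulVec_mulVec, pow_succ']

theorem pow_mulVec_of_mulVec_eq_smul [DecidableEq ι] {lam : ℝ} {v : ι → ℝ}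
    (h : M *ᵥ v = lam • v) (n : ℕ) : M ^ n *ᵥ v = lam ^ n • v := by
  induction n with
  | zero => simp
  | succ n ih => rw [pow_succ', ← mulVec_mulVec, ih, mulVec_smul, h, smul_smul, pow_succ]

theorem norm_map_ofReal_mulVec_apply_le (hM : ∀ i j, 0 ≤ M i j) (z : ι → ℂ) (i : ι) :
    ‖(M.map (algebraMap ℝ ℂ) *ᵥ z) i‖ ≤ (M *ᵥ fun j => ‖z j‖) i :=
  (norm_sum_le _ _).trans_eq <| Finset.sum_congr rfl fun j _ => by
    simp [Real.norm_of_nonneg (hM i j)]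

theorem ofReal_le_spectralRadius_of_smul_le_mulVec_s3 [DecidableEq ι] (hM : ∀ i j, 0 ≤ M i j)
    {r : ℝ} (hr : 0 ≤ r) {u : ι → ℝ} (hu0 : 0 ≤ u) (hu : u ≠ 0) (h : r • u ≤ M *ᵥ u) :
    ENNReal.ofReal r ≤ spectralRadius ℂ (M.map (algebraMap ℝ ℂ)) := by
  refine spectrum.ofReal_le_spectralRadius_of_pow_le_norm_pow _ hr fun n => ?_
  rw [← Matrix.map_pow, linfty_opNorm_map_ofReal]
  refine le_of_mul_le_mul_right ?_ (norm_pos_iff.2 hu)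
  calc r ^ n * ‖u‖ = ‖r ^ n • u‖ := by rw [norm_smul, Real.norm_of_nonneg (pow_nonneg hr n)]
    _ ≤ ‖M ^ n *ᵥ u‖ := pi_norm_le_pi_norm_of_nonneg_of_le
        (smul_nonneg (pow_nonneg hr n) hu0) (pow_smul_le_pow_mulVec_s3 hM hr h n)
    _ ≤ ‖M ^ n‖ * ‖u‖ := linfty_opNorm_mulVec _ _

end Matrix

namespace Matrix.IsIrreducible'

variable {m : ℕ} {M : Matrix (Fin m) (Fin m) ℝ}

theorem transpose (hirr : M.IsIrreducible') : Mᵀ.IsIrreducible' :=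
  fun i j => (hirr j i).imp fun n hn => by rwa [← transpose_pow]

theorem exists_commute_mulVec_pos (hM : ∀ i j, 0 ≤ M i j) (hirr : M.IsIrreducible')
    {y : Fin m → ℝ} (hy0 : 0 ≤ y) (hy : y ≠ 0) :
    ∃ B : Matrix (Fin m) (Fin m) ℝ, Commute M B ∧ (∀ i j, 0 ≤ B i j) ∧ ∀ i, 0 < (B *ᵥ y) i := by
  obtain ⟨k, hk⟩ := Pi.exists_pos_of_nonneg_of_ne_zero hy0 hy
  choose a ha using fun i => hirr i k
  refine ⟨∑ i, M ^ (a i + 1), Commute.sum_right _ _ _ fun i _ => (Commute.refl M).pow_right _,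
    fun i j => ?_, fun i => ?_⟩
  · rw [sum_apply]
    exact Finset.sum_nonneg fun l _ => pow_apply_nonneg hM _ i j
  · rw [sum_mulVec, Finset.sum_apply]
    exact Finset.sum_pos' (fun l _ => mulVec_nonneg (pow_apply_nonneg hM _) hy0 i)
      ⟨i, Finset.mem_univ i, mulVec_apply_pos_s3 (pow_apply_nonneg hM _) hy0 (ha i) hk⟩

theorem mulVec_eq_smul_of_smul_le_mulVec (hM : ∀ i j, 0 ≤ M i j) (hirr : M.IsIrreducible')
    {lam : ℝ} (hlam : 0 ≤ lam)
    (hρ : spectralRadius ℂ (M.map (algebraMap ℝ ℂ)) ≤ ENNReal.ofReal lam)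
    {x : Fin m → ℝ} (hx0 : 0 ≤ x) (hx : x ≠ 0) (h : lam • x ≤ M *ᵥ x) : M *ᵥ x = lam • x := by
  by_contra hne
  set y := M *ᵥ x - lam • x with hy
  have hy0 : 0 ≤ y := sub_nonneg.2 h
  obtain ⟨B, hMB, hB, hBy⟩ := exists_commute_mulVec_pos hM hirr hy0 (sub_ne_zero.2 hne)
  set u := x + B *ᵥ x with hu
  obtain ⟨ε, hε, hεu⟩ := exists_pos_smul_le u hBy
  have hBx0 : 0 ≤ B *ᵥ x := mulVec_nonneg hB hx0
  have hu0 : 0 ≤ u := add_nonneg hx0 hBx0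
  have hu_ne : u ≠ 0 := fun h0 => hx (le_antisymm (h0 ▸ le_add_of_nonneg_right hBx0) hx0)
  have hMu : M *ᵥ u = lam • u + (y + B *ᵥ y) := by
    rw [hu, hy, mulVec_add, mulVec_mulVec, hMB.eq, ← mulVec_mulVec, mulVec_sub, mulVec_smul]
    module
  have hgrow : (lam + ε) • u ≤ M *ᵥ u := by
    rw [hMu, add_smul]
    gcongr
    exact hεu.trans (le_add_of_nonneg_left hy0)
  have := (ofReal_le_spectralRadius_of_smul_le_mulVec_s3 hM (by positivity) hu0 hu_ne hgrow).trans hρ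
  rw [ENNReal.ofReal_le_ofReal_iff hlam] at this
  linarith

theorem exists_nonneg_eigenvector (hM : ∀ i j, 0 ≤ M i j) (hirr : M.IsIrreducible')
    {lam : ℝ} (hlam : 0 ≤ lam) (hroot : M.complexCharpoly.IsRoot (lam : ℂ))
    (hdom : ∀ μ : ℂ, M.complexCharpoly.IsRoot μ → ‖μ‖ ≤ lam) :
    ∃ v : Fin m → ℝ, 0 ≤ v ∧ v ≠ 0 ∧ M *ᵥ v = lam • v := by
  obtain ⟨z, hz, hMz⟩ := exists_mulVec_eq_smul_of_isRoot_charpoly hroot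
  set x : Fin m → ℝ := fun i => ‖z i‖
  have hx : x ≠ 0 := fun h0 => hz (funext fun i => norm_eq_zero.1 (congrFun h0 i))
  have hsub : lam • x ≤ M *ᵥ x := fun i => by
    have := norm_map_ofReal_mulVec_apply_le hM z i
    rwa [hMz, Pi.smul_apply, norm_smul, Complex.norm_real, Real.norm_of_nonneg hlam] at this
  exact ⟨x, fun i => norm_nonneg _, hx, mulVec_eq_smul_of_smul_le_mulVec hM hirr hlam
    (spectralRadius_le_of_forall_isRoot_charpoly hdom) (fun i => norm_nonneg _) hx hsub⟩

theorem pos_of_mulVec_eq_smul (hM : ∀ i j, 0 ≤ M i j) (hirr : M.IsIrreducible') {lam : ℝ}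
    (hlam : 0 < lam) {v : Fin m → ℝ} (hv0 : 0 ≤ v) (hv : v ≠ 0) (heig : M *ᵥ v = lam • v)
    (i : Fin m) : 0 < v i := by
  obtain ⟨j, hj⟩ := Pi.exists_pos_of_nonneg_of_ne_zero hv0 hv
  obtain ⟨n, hn⟩ := hirr i j
  have := mulVec_apply_pos_s3 (pow_apply_nonneg hM _) hv0 hn hj
  rw [pow_mulVec_of_mulVec_eq_smul heig, Pi.smul_apply, smul_eq_mul] at this
  exact pos_of_mul_pos_right this (pow_nonneg hlam.le _)

end Matrix.IsIrreducible'

/-- Perron–Frobenius theorem: an irreducible nonnegative real square matrix has nonnegative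
right and left eigenvectors for the Perron–Frobenius eigenvalue, normalized so that
`wᵀv = 1`. -/
theorem perron_frobenius_eigenvectors {m : ℕ} (M : Matrix (Fin m) (Fin m) ℝ)
    (hnn : ∀ i j, 0 ≤ M i j) (hirr : M.IsIrreducible')
    (lam : ℝ) (hpos : 0 < lam) (hroot : M.complexCharpoly.IsRoot (lam : ℂ))
    (hdom : ∀ μ : ℂ, M.complexCharpoly.IsRoot μ → ‖μ‖ ≤ lam) :
    ∃ v w : Fin m → ℝ, (∀ i, 0 ≤ v i) ∧ (∀ i, 0 ≤ w i) ∧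
      M.mulVec v = lam • v ∧ Matrix.vecMul w M = lam • w ∧
      dotProduct w v = 1 := by
  obtain ⟨v, hv0, hv, hMv⟩ := hirr.exists_nonneg_eigenvector hnn hpos.le hroot hdom
  rw [← complexCharpoly_transpose] at hroot hdom
  obtain ⟨w, hw0, hw, hwM⟩ :=
    hirr.transpose.exists_nonneg_eigenvector (M := Mᵀ) (fun i j => hnn j i) hpos.le hroot hdom
  rw [mulVec_transpose] at hwM
  have hwv : 0 < w ⬝ᵥ v := by
    obtain ⟨k, hk⟩ := Pi.exists_pos_of_nonneg_of_ne_zero hw0 hw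
    exact Finset.sum_pos' (fun i _ => mul_nonneg (hw0 i) (hv0 i)) ⟨k, Finset.mem_univ k,
      mul_pos hk (hirr.pos_of_mulVec_eq_smul hnn hpos hv0 hv hMv k)⟩
  refine ⟨(w ⬝ᵥ v)⁻¹ • v, w, smul_nonneg (inv_nonneg.2 hwv.le) hv0, hw0, ?_, hwM, ?_⟩
  · rw [mulVec_smul, hMv, smul_comm]
  · rw [dotProduct_smul, smul_eq_mul, inv_mul_cancel₀ hwv.ne']
end

section
/- Every nonnegative real square matrix M has an eigenvalue λ ∈ ℝ with λ ≥ 0 such that λ ≥ |μ| for every complex eigenvalue μ of M. -/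
def Matrix.IsIrreducibleReal {m : ℕ} (M : Matrix (Fin m) (Fin m) ℝ) : Prop :=
  ∀ i j : Fin m, ∃ n : ℕ, 0 < (M ^ (n + 1)) i j

/-!
For a positive matrix `Q`, maximise `t` over the compact Collatz–Wielandt set of pairs `(t, x)`
with `x` in the standard simplex and `t • x ≤ Q *ᵥ x`. At a maximiser `(r, x)` equality holds:
otherwise `Q` maps the nonzero vector `Q *ᵥ x - r • x ≥ 0` to a strictly positive one, so
`Q *ᵥ x` admits a larger `t`. This yields a positive Perron eigenvector.

Applied to the transposes of the positive matrices `Qₙ = M + (n + 1)⁻¹ J` (`J` all ones), it gives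
positive left eigenvectors `wₙ` with eigenvalues `sₙ`. If `|A| ≤ Qₙ` entrywise and `A u = μ u` with
`u ≠ 0`, then `‖μ‖ (wₙ ⬝ |u|) ≤ wₙ ⬝ Qₙ |u| = sₙ (wₙ ⬝ |u|)`, so `sₙ` dominates every eigenvalue
of `M` and of `Qₙ₊₁`. Hence `sₙ` decreases to some `λ ≥ 0` dominating all eigenvalues of `M`, and
`λ` is an eigenvalue of `M` because eigenvalue–matrix pairs form a closed set.
-/

open Matrix Polynomial Filter Topology

theorem ne_zero_of_mem_stdSimplex {𝕜 ι : Type*} [Semiring 𝕜] [PartialOrder 𝕜] [Nontrivial 𝕜]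
    [Fintype ι] {x : ι → 𝕜} (hx : x ∈ stdSimplex 𝕜 ι) : x ≠ 0 := by
  rintro rfl
  simp [stdSimplex] at hx

namespace Matrix

section Charpoly

variable {ι K : Type*} [Fintype ι] [DecidableEq ι]

theorem isRoot_charpoly_iff_exists_mulVec_eq_smul [Field K] (A : Matrix ι ι K) (μ : K) :
    A.charpoly.IsRoot μ ↔ ∃ v ≠ 0, A *ᵥ v = μ • v := by
  rw [IsRoot, eval_charpoly, ← exists_mulVec_eq_zero_iff]
  simp [sub_mulVec, scalar_apply, sub_eq_zero, eq_comm]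

theorem isRoot_charpoly_map {R S : Type*} [CommRing R] [CommRing S] (f : R →+* S)
    {A : Matrix ι ι R} {t : R} (h : A.charpoly.IsRoot t) : (A.map f).charpoly.IsRoot (f t) := by
  rw [charpoly_map]
  exact h.map

theorem isClosed_setOf_isRoot_charpoly [CommRing K] [TopologicalSpace K] [IsTopologicalRing K]
    [T2Space K] : IsClosed {p : K × Matrix ι ι K | p.2.charpoly.IsRoot p.1} := by
  simp only [IsRoot, eval_charpoly, scalar_apply]
  exact isClosed_eq (by fun_prop) continuous_const

end Charpoly

theorem exists_seq_pos_antitone_tendsto {ι : Type*} {M : Matrix ι ι ℝ} (hM : ∀ i j, 0 ≤ M i j) :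
    ∃ Q : ℕ → Matrix ι ι ℝ, (∀ n i j, 0 < Q n i j) ∧ (∀ n i j, M i j ≤ Q n i j) ∧
      (∀ n i j, Q (n + 1) i j ≤ Q n i j) ∧ Tendsto Q atTop (𝓝 M) := by
  have hε : Tendsto (fun n : ℕ => of fun _ _ => 1 / (n + 1 : ℝ)) atTop (𝓝 (0 : Matrix ι ι ℝ)) :=
    tendsto_pi_nhds.2 fun _ => tendsto_pi_nhds.2 fun _ => tendsto_one_div_add_atTop_nhds_zero_nat
  refine ⟨fun n => M + of fun _ _ => 1 / (n + 1 : ℝ), fun n i j => ?_, fun n i j => ?_,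
    fun n i j => ?_, by simpa using (tendsto_const_nhds (x := M)).add hε⟩
  · exact add_pos_of_nonneg_of_pos (hM i j) Nat.one_div_pos_of_nat
  · exact le_add_of_nonneg_right Nat.one_div_pos_of_nat.le
  · simpa using Nat.one_div_le_one_div (α := ℝ) n.le_succ

variable {ι : Type*} [Fintype ι]

theorem norm_le_of_mulVec_eq_smul_of_vecMul_eq_smul {𝕜 : Type*} [NormedField 𝕜]
    {A : Matrix ι ι 𝕜} {Q : Matrix ι ι ℝ} (hAQ : ∀ i j, ‖A i j‖ ≤ Q i j) {s : ℝ} {w : ι → ℝ}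
    (hw : ∀ i, 0 < w i) (hws : w ᵥ* Q = s • w) {μ : 𝕜} {u : ι → 𝕜} (hu : u ≠ 0)
    (hμ : A *ᵥ u = μ • u) : ‖μ‖ ≤ s := by
  set a : ι → ℝ := fun i => ‖u i‖
  have ha : 0 ≤ a := fun i => norm_nonneg _
  have hwa : 0 < w ⬝ᵥ a := by
    obtain ⟨i, hi⟩ := Function.ne_iff.mp hu
    exact Finset.sum_pos' (fun j _ => mul_nonneg (hw j).le (ha j))
      ⟨i, Finset.mem_univ i, mul_pos (hw i) (norm_pos_iff.mpr hi)⟩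
  have hle : ‖μ‖ • a ≤ Q *ᵥ a := fun i => calc
    ‖μ‖ * a i = ‖∑ j, A i j * u j‖ := by rw [← norm_mul, ← smul_eq_mul, ← Pi.smul_apply, ← hμ]; rfl
    _ ≤ ∑ j, ‖A i j‖ * a j := (norm_sum_le _ _).trans_eq (by simp_rw [norm_mul, a])
    _ ≤ (Q *ᵥ a) i := Finset.sum_le_sum fun j _ => mul_le_mul_of_nonneg_right (hAQ i j) (ha j)
  have : ‖μ‖ * (w ⬝ᵥ a) ≤ s * (w ⬝ᵥ a) := calc
    ‖μ‖ * (w ⬝ᵥ a) = w ⬝ᵥ (‖μ‖ • a) := by rw [dotProduct_smul, smul_eq_mul]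
    _ ≤ w ⬝ᵥ (Q *ᵥ a) := dotProduct_le_dotProduct_of_nonneg_left hle fun i => (hw i).le
    _ = s * (w ⬝ᵥ a) := by rw [dotProduct_mulVec, hws, smul_dotProduct, smul_eq_mul]
  exact le_of_mul_le_mul_right this hwa

theorem mulVec_pos_of_pos {Q : Matrix ι ι ℝ} (hQ : ∀ i j, 0 < Q i j) {x : ι → ℝ} (hx : 0 ≤ x)
    (hx0 : x ≠ 0) (i : ι) : 0 < (Q *ᵥ x) i := by
  obtain ⟨j, hj⟩ := Function.ne_iff.mp hx0
  exact Finset.sum_pos' (fun k _ => mul_nonneg (hQ i k).le (hx k))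
    ⟨j, Finset.mem_univ j, mul_pos (hQ i j) ((hx j).lt_of_ne' hj)⟩

def collatzWielandtSet (Q : Matrix ι ι ℝ) : Set (ℝ × (ι → ℝ)) :=
  {p | 0 ≤ p.1 ∧ p.2 ∈ stdSimplex ℝ ι ∧ p.1 • p.2 ≤ Q *ᵥ p.2}

theorem le_sum_of_smul_le_mulVec {Q : Matrix ι ι ℝ} (hQ : ∀ i j, 0 ≤ Q i j) {t : ℝ}
    {x : ι → ℝ} (hx : x ∈ stdSimplex ℝ ι) (h : t • x ≤ Q *ᵥ x) : t ≤ ∑ i, ∑ j, Q i j := calc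
  t = ∑ i, t * x i := by rw [← Finset.mul_sum, hx.2, mul_one]
  _ ≤ ∑ i, ∑ j, Q i j * x j := Finset.sum_le_sum fun i _ => h i
  _ ≤ ∑ i, ∑ j, Q i j := by
    gcongr with i _ j _
    exact mul_le_of_le_one_right (hQ i j) (mem_Icc_of_mem_stdSimplex hx j).2

theorem isCompact_collatzWielandtSet {Q : Matrix ι ι ℝ} (hQ : ∀ i j, 0 ≤ Q i j) :
    IsCompact Q.collatzWielandtSet := by
  refine (isCompact_Icc.prod (isCompact_stdSimplex ℝ ι)).of_isClosed_subset ?_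
    fun p hp => ⟨⟨hp.1, le_sum_of_smul_le_mulVec hQ hp.2.1 hp.2.2⟩, hp.2.1⟩
  exact (isClosed_le continuous_const continuous_fst).inter
    (((isClosed_stdSimplex ℝ ι).preimage continuous_snd).inter
      (isClosed_le (continuous_fst.smul continuous_snd)
        (continuous_const.matrix_mulVec continuous_snd)))

theorem mk_inv_sum_smul_mem_collatzWielandtSet {Q : Matrix ι ι ℝ} {t : ℝ} (ht : 0 ≤ t)
    {z : ι → ℝ} (hz : 0 ≤ z) (hz0 : z ≠ 0) (h : t • z ≤ Q *ᵥ z) :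
    (t, (∑ i, z i)⁻¹ • z) ∈ Q.collatzWielandtSet := by
  have hsum : 0 < ∑ i, z i := by
    obtain ⟨j, hj⟩ := Function.ne_iff.mp hz0
    exact Finset.sum_pos' (fun i _ => hz i) ⟨j, Finset.mem_univ j, (hz j).lt_of_ne' hj⟩
  refine ⟨ht, ⟨fun i => mul_nonneg (inv_nonneg.2 hsum.le) (hz i), ?_⟩, ?_⟩
  · simp [← Finset.mul_sum, hsum.ne']
  · rw [smul_comm, mulVec_smul]
    exact smul_le_smul_of_nonneg_left h (inv_nonneg.2 hsum.le)

theorem exists_gt_mem_collatzWielandtSet {Q : Matrix ι ι ℝ} (hQ : ∀ i j, 0 < Q i j)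
    {r : ℝ} {x : ι → ℝ} (hrx : (r, x) ∈ Q.collatzWielandtSet) (hne : r • x ≠ Q *ᵥ x) :
    ∃ t > r, ∃ y, (t, y) ∈ Q.collatzWielandtSet := by
  obtain ⟨hr, hx, hle⟩ := hrx
  have hx0 := ne_zero_of_mem_stdSimplex hx
  set z := Q *ᵥ x
  have hy : 0 ≤ z - r • x := sub_nonneg.2 hle
  have hy0 : z - r • x ≠ 0 := sub_ne_zero.2 (Ne.symm hne)
  have hQz : ∀ i, r * z i < (Q *ᵥ z) i := fun i => by
    have := mulVec_pos_of_pos hQ hy hy0 i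
    rwa [mulVec_sub, mulVec_smul, Pi.sub_apply, Pi.smul_apply, smul_eq_mul, sub_pos] at this
  have hnear : ∀ᶠ t in 𝓝 r, ∀ i, t * z i < (Q *ᵥ z) i := eventually_all.2 fun i =>
    (continuous_id.mul continuous_const).continuousAt.eventually_lt continuousAt_const (hQz i)
  obtain ⟨t, hzt, hrt⟩ := ((hnear.filter_mono nhdsWithin_le_nhds).and
    (self_mem_nhdsWithin : Set.Ioi r ∈ 𝓝[>] r)).exists
  have hz : ∀ i, 0 < z i := mulVec_pos_of_pos hQ hx.1 hx0
  obtain ⟨j, -⟩ := Function.ne_iff.mp hx0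
  exact ⟨t, hrt, _, mk_inv_sum_smul_mem_collatzWielandtSet (hr.trans hrt.le)
    (fun i => (hz i).le) (fun h => (hz j).ne' (congrFun h j)) fun i => (hzt i).le⟩

theorem exists_pos_eigenvector_of_pos [Nonempty ι] {Q : Matrix ι ι ℝ} (hQ : ∀ i j, 0 < Q i j) :
    ∃ r : ℝ, 0 ≤ r ∧ ∃ w : ι → ℝ, (∀ i, 0 < w i) ∧ Q *ᵥ w = r • w := by
  have hne : Q.collatzWielandtSet.Nonempty :=
    ⟨_, mk_inv_sum_smul_mem_collatzWielandtSet le_rfl zero_le_one one_ne_zero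
      (by rw [zero_smul]; exact fun i => (mulVec_pos_of_pos hQ zero_le_one one_ne_zero i).le)⟩
  obtain ⟨⟨r, x⟩, hrx, hmax⟩ :=
    (isCompact_collatzWielandtSet fun i j => (hQ i j).le).exists_isMaxOn hne
      continuous_fst.continuousOn
  have heq : Q *ᵥ x = r • x := by
    by_contra h
    obtain ⟨t, hrt, y, hty⟩ := exists_gt_mem_collatzWielandtSet hQ hrx (Ne.symm h)
    exact (hmax hty).not_gt hrt
  obtain ⟨hr, hx, -⟩ := hrx
  refine ⟨r, hr, x, fun i => ?_, heq⟩
  have := mulVec_pos_of_pos hQ hx.1 (ne_zero_of_mem_stdSimplex hx) i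
  rw [heq, Pi.smul_apply, smul_eq_mul] at this
  exact pos_of_mul_pos_right this hr

theorem exists_isRoot_charpoly_forall_norm_le_of_pos [DecidableEq ι] [Nonempty ι]
    {Q : Matrix ι ι ℝ} (hQ : ∀ i j, 0 < Q i j) :
    ∃ s : ℝ, 0 ≤ s ∧ Q.charpoly.IsRoot s ∧ ∀ A : Matrix ι ι ℝ, (∀ i j, |A i j| ≤ Q i j) →
      ∀ μ : ℂ, (A.map (algebraMap ℝ ℂ)).charpoly.IsRoot μ → ‖μ‖ ≤ s := by
  obtain ⟨s, hs, w, hw, hws⟩ := exists_pos_eigenvector_of_pos fun i j => hQ j i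
  have hw0 : w ≠ 0 := fun h => (hw (Classical.arbitrary ι)).ne' (congrFun h _)
  refine ⟨s, hs, charpoly_transpose Q ▸
    (isRoot_charpoly_iff_exists_mulVec_eq_smul _ _).2 ⟨w, hw0, hws⟩, fun A hA μ hμ => ?_⟩
  obtain ⟨u, hu, hAu⟩ := (isRoot_charpoly_iff_exists_mulVec_eq_smul _ μ).1 hμ
  exact norm_le_of_mulVec_eq_smul_of_vecMul_eq_smul (fun i j => by simpa using hA i j) hw
    ((mulVec_transpose _ _).symm.trans hws) hu hAu

end Matrix

/-- Every nonnegative real square matrix has a nonnegative real eigenvalue dominating all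
complex eigenvalues in absolute value. -/
theorem perron_frobenius_general {m : ℕ} (hm : 0 < m) (M : Matrix (Fin m) (Fin m) ℝ)
    (hnn : ∀ i j, 0 ≤ M i j) :
    ∃ lam : ℝ, 0 ≤ lam ∧ M.complexCharpoly.IsRoot (lam : ℂ) ∧
      ∀ μ : ℂ, M.complexCharpoly.IsRoot μ → ‖μ‖ ≤ lam := by
  have : Nonempty (Fin m) := ⟨⟨0, hm⟩⟩
  obtain ⟨Q, hQpos, hMQ, hQanti, hQlim⟩ := exists_seq_pos_antitone_tendsto hnn
  choose s hs hroot hdom using fun n => exists_isRoot_charpoly_forall_norm_le_of_pos (hQpos n)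
  have hanti : Antitone s := antitone_nat_of_succ_le fun n => by
    simpa [abs_of_nonneg (hs _)] using hdom n (Q (n + 1))
      (fun i j => (abs_of_pos (hQpos _ i j)).trans_le (hQanti n i j)) _
      (isRoot_charpoly_map (algebraMap ℝ ℂ) (hroot (n + 1)))
  have hlim : Tendsto s atTop (𝓝 (⨅ n, s n)) :=
    tendsto_atTop_ciInf hanti ⟨0, Set.forall_mem_range.2 hs⟩
  refine ⟨⨅ n, s n, le_ciInf hs, isRoot_charpoly_map (algebraMap ℝ ℂ) ?_, fun μ hμ =>
    le_ciInf fun n => hdom n M (fun i j => (abs_of_nonneg (hnn i j)).trans_le (hMQ n i j)) μ hμ⟩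
  exact isClosed_setOf_isRoot_charpoly.mem_of_tendsto (hlim.prodMk_nhds hQlim)
    (Eventually.of_forall hroot)
end
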